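/- Derivative of the attitude error vector: let R, R_d : ℝ → M_3(ℝ) be differentiable with R(t), R_d(t) ∈ SO(3) for all t, and let ω, ω_d : ℝ → ℝ^3 satisfy R'(t) = R(t) [ω(t)]_× and R_d'(t) = R_d(t) [ω_d(t)]_×. Then the attitude error vector e_R(t) = (1/2) (R_d(t)ᵀ R(t) − R(t)ᵀ R_d(t))∨ is differentiable with e_R'(t) = (1/2) ( tr(R(t)ᵀ R_d(t)) I − R(t)ᵀ R_d(t) ) e_ω(t), where e_ω(t) = ω(t) − R(t)ᵀ R_d(t) ω_d(t). -/

import Mathlib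

open Real Matrix

attribute [local instance] Matrix.normedAddCommGroup Matrix.normedSpace

/-- `SO(3)`: real 3×3 matrices `Q` with `Qᵀ Q = I` and `det Q = 1`. -/
def SO3 (Q : Matrix (Fin 3) (Fin 3) ℝ) : Prop :=
  Qᵀ * Q = 1 ∧ Q.det = 1

/-- The hat map `[x]_×`: the skew-symmetric matrix with `[x]_× y = x × y`. -/
noncomputable def hat (x : EuclideanSpace ℝ (Fin 3)) : Matrix (Fin 3) (Fin 3) ℝ :=
  !![0, -x 2, x 1; x 2, 0, -x 0; -x 1, x 0, 0]

/-- The attitude error function `Ψ(R, R_d) = (1/2) tr(I − R_dᵀ R)`. -/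
noncomputable def Psi (R Rd : Matrix (Fin 3) (Fin 3) ℝ) : ℝ :=
  (1 / 2 : ℝ) * (1 - Rdᵀ * R).trace

/-- The attitude error vector `e_R = (1/2) (R_dᵀ R − Rᵀ R_d)∨`, where `∨` is the
vee map from skew-symmetric matrices to `ℝ³`. -/
noncomputable def errVec (R Rd : Matrix (Fin 3) (Fin 3) ℝ) : EuclideanSpace ℝ (Fin 3) :=
  (1 / 2 : ℝ) • (WithLp.toLp 2 ![(Rdᵀ * R - Rᵀ * Rd) 2 1, (Rdᵀ * R - Rᵀ * Rd) 0 2,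
    (Rdᵀ * R - Rᵀ * Rd) 1 0] : EuclideanSpace ℝ (Fin 3))

/-- The angular velocity error `e_ω = ω − Rᵀ R_d ω_d`. -/
noncomputable def errOmega (R Rd : Matrix (Fin 3) (Fin 3) ℝ)
    (ω ωd : EuclideanSpace ℝ (Fin 3)) : EuclideanSpace ℝ (Fin 3) :=
  ω - (show EuclideanSpace ℝ (Fin 3) from WithLp.toLp 2 ((Rᵀ * Rd).mulVec ωd))

-- universal 3x3 identity: adjugate in terms of powers
lemma adj3 (Q : Matrix (Fin 3) (Fin 3) ℝ) :
    Q.adjugate = Q * Q - Q.trace • Q + Q.adjugate.trace • 1 := by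
  ext i j
  fin_cases i <;> fin_cases j <;>
    simp [Matrix.adjugate_fin_three, Matrix.mul_apply, Matrix.trace,
      Fin.sum_univ_three, Matrix.one_apply] <;> ring

lemma so3_key (Q : Matrix (Fin 3) (Fin 3) ℝ) (h : Qᵀ * Q = 1) (hd : Q.det = 1) :
    (Q.trace • (1 : Matrix (Fin 3) (Fin 3) ℝ) - Q) * Q = Q.trace • 1 - Qᵀ := by
  have h2 : Q * Qᵀ = 1 := mul_eq_one_comm.mp h
  have hadj : Q.adjugate = Qᵀ := by
    have : Qᵀ * (Q * Q.adjugate) = Q.adjugate := by rw [← mul_assoc, h, one_mul]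
    rw [Matrix.mul_adjugate, hd, one_smul, mul_one] at this
    exact this.symm
  have h3 := adj3 Q
  rw [hadj, Matrix.trace_transpose] at h3
  rw [sub_mul, Matrix.smul_mul, one_mul, h3]
  abel

set_option maxHeartbeats 1000000 in
lemma main_alg (A B : Matrix (Fin 3) (Fin 3) ℝ) (w v : EuclideanSpace ℝ (Fin 3))
    (hA : Aᵀ * A = 1) (hdA : A.det = 1) (hB : Bᵀ * B = 1) (hdB : B.det = 1) :
    ((1 / 2 : ℝ) • (![((B * hat v)ᵀ * A + Bᵀ * (A * hat w) - ((A * hat w)ᵀ * B + Aᵀ * (B * hat v))) 2 1,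
      ((B * hat v)ᵀ * A + Bᵀ * (A * hat w) - ((A * hat w)ᵀ * B + Aᵀ * (B * hat v))) 0 2,
      ((B * hat v)ᵀ * A + Bᵀ * (A * hat w) - ((A * hat w)ᵀ * B + Aᵀ * (B * hat v))) 1 0]) : Fin 3 → ℝ) =
    ((1 / 2 : ℝ) • ((Aᵀ * B).trace • (1 : Matrix (Fin 3) (Fin 3) ℝ) - Aᵀ * B)).mulVec
        (w.ofLp - (Aᵀ * B).mulVec v) := by
  have hQ : (Aᵀ * B)ᵀ * (Aᵀ * B) = 1 := by
    rw [Matrix.transpose_mul, Matrix.transpose_transpose, mul_assoc, ← mul_assoc A,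
      mul_eq_one_comm.mp hA, one_mul, hB]
  have hdQ : (Aᵀ * B).det = 1 := by
    rw [Matrix.det_mul, Matrix.det_transpose, hdA, hdB, one_mul]
  have key := so3_key (Aᵀ * B) hQ hdQ
  rw [Matrix.smul_mulVec, Matrix.mulVec_sub, Matrix.mulVec_mulVec, key]
  congr 1
  funext i
  fin_cases i <;>
    simp only [Matrix.mulVec, dotProduct, Matrix.sub_apply, Matrix.smul_apply,
      Matrix.one_apply, Matrix.trace, Matrix.diag, Fin.sum_univ_three,
      Matrix.mul_apply, Matrix.transpose_apply, hat, Matrix.add_apply,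
      Matrix.cons_val', Matrix.cons_val_zero, Matrix.cons_val_one, Matrix.head_cons,
      Matrix.empty_val', Matrix.cons_val_fin_one, Matrix.head_fin_const,
      Matrix.cons_val_two, Matrix.tail_cons, Fin.isValue, smul_eq_mul,
      Matrix.of_apply, Pi.sub_apply, Fin.reduceFinMk] <;>
    norm_num [Fin.ext_iff] <;> ring

/-- **Derivative of the attitude error vector**: if `R' = R[ω]_×` and
`R_d' = R_d[ω_d]_×` with values in `SO(3)`, then `e_R` is differentiable with
`e_R' = (1/2)(tr(Rᵀ R_d) I − Rᵀ R_d) e_ω`. -/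
theorem errVec_hasDerivAt (R Rd : ℝ → Matrix (Fin 3) (Fin 3) ℝ)
    (ω ωd : ℝ → EuclideanSpace ℝ (Fin 3))
    (hRso : ∀ t, SO3 (R t)) (hRdso : ∀ t, SO3 (Rd t))
    (hR : ∀ t, HasDerivAt R (R t * hat (ω t)) t)
    (hRd : ∀ t, HasDerivAt Rd (Rd t * hat (ωd t)) t) (t : ℝ) :
    HasDerivAt (fun s => errVec (R s) (Rd s))
      (show EuclideanSpace ℝ (Fin 3) from WithLp.toLp 2 (
        ((1 / 2 : ℝ) • (((R t)ᵀ * Rd t).trace • (1 : Matrix (Fin 3) (Fin 3) ℝ)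
            - (R t)ᵀ * Rd t)).mulVec
          (errOmega (R t) (Rd t) (ω t) (ωd t)))) t := by
  have hent : ∀ i j : Fin 3, HasDerivAt (fun s => R s i j) ((R t * hat (ω t)) i j) t := by
    intro i j
    exact ((Matrix.entryLinearMap ℝ ℝ i j).toContinuousLinearMap.hasFDerivAt).comp_hasDerivAt
      t (hR t)
  have hdent : ∀ i j : Fin 3, HasDerivAt (fun s => Rd s i j) ((Rd t * hat (ωd t)) i j) t := by
    intro i j
    exact ((Matrix.entryLinearMap ℝ ℝ i j).toContinuousLinearMap.hasFDerivAt).comp_hasDerivAt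
      t (hRd t)
  set dR := R t * hat (ω t) with hdR
  set dRd := Rd t * hat (ωd t) with hdRd
  have hF : ∀ i j : Fin 3, HasDerivAt (fun s => ((Rd s)ᵀ * R s - (R s)ᵀ * Rd s) i j)
      ((dRdᵀ * R t + (Rd t)ᵀ * dR - (dRᵀ * Rd t + (R t)ᵀ * dRd)) i j) t := by
    intro i j
    have heq : (fun s => ((Rd s)ᵀ * R s - (R s)ᵀ * Rd s) i j)
        = fun s => (∑ k, Rd s k i * R s k j) - ∑ k, R s k i * Rd s k j := by
      funext s
      simp [Matrix.sub_apply, Matrix.mul_apply, Matrix.transpose_apply]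
    have hD : ((dRdᵀ * R t + (Rd t)ᵀ * dR - (dRᵀ * Rd t + (R t)ᵀ * dRd)) i j)
        = (∑ k, (dRd k i * R t k j + Rd t k i * dR k j))
          - ∑ k, (dR k i * Rd t k j + R t k i * dRd k j) := by
      simp [Matrix.sub_apply, Matrix.add_apply, Matrix.mul_apply, Matrix.transpose_apply,
        Finset.sum_add_distrib]
    rw [heq, hD]
    exact (HasDerivAt.fun_sum fun k _ => (hdent k i).mul (hent k j)).sub
      (HasDerivAt.fun_sum fun k _ => (hent k i).mul (hdent k j))
  set M := dRdᵀ * R t + (Rd t)ᵀ * dR - (dRᵀ * Rd t + (R t)ᵀ * dRd) with hM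
  have hg : HasDerivAt
      (fun s => ((1 / 2 : ℝ) • ![((Rd s)ᵀ * R s - (R s)ᵀ * Rd s) 2 1,
        ((Rd s)ᵀ * R s - (R s)ᵀ * Rd s) 0 2,
        ((Rd s)ᵀ * R s - (R s)ᵀ * Rd s) 1 0] : Fin 3 → ℝ))
      ((1 / 2 : ℝ) • ![M 2 1, M 0 2, M 1 0] : Fin 3 → ℝ) t := by
    rw [hasDerivAt_pi]
    intro i
    fin_cases i <;>
      simp only [Pi.smul_apply, Matrix.cons_val_zero, Matrix.cons_val_one, Matrix.head_cons,
        Matrix.cons_val_two, Matrix.tail_cons, smul_eq_mul, Fin.reduceFinMk, Fin.isValue]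
    · exact (hF 2 1).const_mul _
    · exact (hF 0 2).const_mul _
    · exact (hF 1 0).const_mul _
  have hg2 := ((EuclideanSpace.equiv (Fin 3) ℝ).symm.hasFDerivAt).comp_hasDerivAt t hg
  have halg := main_alg (R t) (Rd t) (ω t) (ωd t) (hRso t).1 (hRso t).2 (hRdso t).1 (hRdso t).2
  have hderiv : (show EuclideanSpace ℝ (Fin 3) from WithLp.toLp 2 (
        ((1 / 2 : ℝ) • (((R t)ᵀ * Rd t).trace • (1 : Matrix (Fin 3) (Fin 3) ℝ)
            - (R t)ᵀ * Rd t)).mulVec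
          (errOmega (R t) (Rd t) (ω t) (ωd t))))
      = (EuclideanSpace.equiv (Fin 3) ℝ).symm ((1 / 2 : ℝ) • ![M 2 1, M 0 2, M 1 0]) :=
    congrArg (WithLp.toLp 2) halg.symm
  rw [hderiv]
  exact hg2
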